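/- Every W-invariant polynomial f ∈ ℂ[X,Y] (i.e. r·f = f and s·f = f) with f(0,0) = 0 belongs to the ideal of ℂ[X,Y] generated by XY and X^n + Y^n. -/
import Mathlib


open MvPolynomial

noncomputable section

/-- The action of the generator `r` of the dihedral group `D_n` on `ℂ[X,Y]`:
the `ℂ`-algebra automorphism determined by `X ↦ ζ·X`, `Y ↦ ζ⁻¹·Y`. -/
def rAct (ζ : ℂ) : MvPolynomial (Fin 2) ℂ →ₐ[ℂ] MvPolynomial (Fin 2) ℂ :=
  aeval ![ζ • X 0, ζ⁻¹ • X 1]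

/-- The action of the generator `s` of the dihedral group `D_n` on `ℂ[X,Y]`:
the `ℂ`-algebra automorphism determined by `X ↦ Y`, `Y ↦ X`. -/
def sAct : MvPolynomial (Fin 2) ℂ →ₐ[ℂ] MvPolynomial (Fin 2) ℂ :=
  aeval ![X 1, X 0]

lemma monomial_eq_two (d : Fin 2 →₀ ℕ) (c : ℂ) :
    (monomial d c : MvPolynomial (Fin 2) ℂ) = C c * X 0 ^ d 0 * X 1 ^ d 1 := by
  have hd : d = Finsupp.single 0 (d 0) + Finsupp.single 1 (d 1) := by
    ext i; fin_cases i <;> simp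
  rw [C_mul_X_pow_eq_monomial, X_pow_eq_monomial, monomial_mul, mul_one, ← hd]

lemma rAct_monomial (ζ : ℂ) (d : Fin 2 →₀ ℕ) (c : ℂ) :
    rAct ζ (monomial d c) = monomial d (ζ ^ d 0 * (ζ⁻¹) ^ d 1 * c) := by
  simp only [monomial_eq_two, rAct, map_mul, map_pow, aeval_C, aeval_X,
    Matrix.cons_val_zero, Matrix.cons_val_one, Matrix.head_cons,
    smul_pow, Algebra.smul_def, algebraMap_eq, C_mul, C_pow]
  ring

lemma coeff_rAct (ζ : ℂ) (f : MvPolynomial (Fin 2) ℂ) (d : Fin 2 →₀ ℕ) :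
    coeff d (rAct ζ f) = ζ ^ d 0 * (ζ⁻¹) ^ d 1 * coeff d f := by
  conv_lhs => rw [f.as_sum]
  rw [map_sum]
  simp only [rAct_monomial]
  rw [coeff_sum]
  simp only [coeff_monomial]
  rw [Finset.sum_ite_eq' f.support d]
  split_ifs with h
  · rfl
  · rw [notMem_support_iff.mp h, mul_zero]

lemma sAct_eq_rename : sAct = rename (Equiv.swap (0 : Fin 2) 1) := by
  apply algHom_ext
  intro i
  fin_cases i <;> simp [sAct, Equiv.swap_apply_def]

/-- the swap on exponent vectors -/
def sw (d : Fin 2 →₀ ℕ) : Fin 2 →₀ ℕ := Finsupp.mapDomain (Equiv.swap (0 : Fin 2) 1) d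

lemma sw_apply_0 (d : Fin 2 →₀ ℕ) : sw d 0 = d 1 := by
  rw [sw, Finsupp.mapDomain_equiv_apply]; simp
lemma sw_apply_1 (d : Fin 2 →₀ ℕ) : sw d 1 = d 0 := by
  rw [sw, Finsupp.mapDomain_equiv_apply]; simp
lemma sw_sw (d : Fin 2 →₀ ℕ) : sw (sw d) = d := by
  ext i; fin_cases i <;> simp [sw_apply_0, sw_apply_1]

lemma coeff_sAct (f : MvPolynomial (Fin 2) ℂ) (d : Fin 2 →₀ ℕ) :
    coeff (sw d) (sAct f) = coeff d f := by
  rw [sAct_eq_rename, sw, coeff_rename_mapDomain _ (Equiv.swap (0 : Fin 2) 1).injective]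

lemma fin2_eq_zero (d : Fin 2 →₀ ℕ) (h0 : d 0 = 0) (h1 : d 1 = 0) : d = 0 := by
  ext i; fin_cases i <;> simpa

lemma monomial_mem_XY (d : Fin 2 →₀ ℕ) (c : ℂ) (h0 : d 0 ≠ 0) (h1 : d 1 ≠ 0) :
    (monomial d c : MvPolynomial (Fin 2) ℂ) ∈
      Ideal.span {(X 0 * X 1 : MvPolynomial (Fin 2) ℂ)} := by
  have key : (monomial d c : MvPolynomial (Fin 2) ℂ) =
      (X 0 * X 1) * (C c * X 0 ^ (d 0 - 1) * X 1 ^ (d 1 - 1)) := by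
    rw [monomial_eq_two]
    obtain ⟨a, ha⟩ : ∃ a, d 0 = a + 1 := ⟨d 0 - 1, by omega⟩
    obtain ⟨b, hb⟩ : ∃ b, d 1 = b + 1 := ⟨d 1 - 1, by omega⟩
    rw [ha, hb]
    simp only [Nat.add_sub_cancel, pow_succ]
    ring
  rw [key]
  exact Ideal.mul_mem_right _ _ (Ideal.subset_span rfl)

lemma powsum_mem (n : ℕ) (hn : 1 ≤ n) : ∀ k, 1 ≤ k →
    ((X 0 : MvPolynomial (Fin 2) ℂ) ^ (k * n) + X 1 ^ (k * n)) ∈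
      Ideal.span {X 0 * X 1, (X 0 : MvPolynomial (Fin 2) ℂ) ^ n + X 1 ^ n} := by
  intro k hk
  induction k, hk using Nat.le_induction with
  | base =>
      rw [one_mul]
      exact Ideal.subset_span (Set.mem_insert_of_mem _ rfl)
  | succ k hk ih =>
      obtain ⟨m, hm⟩ : ∃ m, n = m + 1 := ⟨n - 1, by omega⟩
      have hkn : 1 ≤ k * n := Nat.one_le_iff_ne_zero.mpr (by positivity)
      obtain ⟨j, hj⟩ : ∃ j, k * n = j + 1 := ⟨k * n - 1, by omega⟩
      have key : ((X 0 : MvPolynomial (Fin 2) ℂ) ^ ((k+1) * n) + X 1 ^ ((k+1) * n)) =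
          ((X 0 : MvPolynomial (Fin 2) ℂ) ^ n + X 1 ^ n) * (X 0 ^ (k * n) + X 1 ^ (k * n))
          - (X 0 * X 1) * (X 0 ^ m * X 1 ^ j + X 0 ^ j * X 1 ^ m) := by
        have h2 : (k+1) * n = (j+1) + (m+1) := by rw [add_mul, one_mul, hj, hm]
        rw [h2, hj, hm]; ring
      rw [key]
      exact Ideal.sub_mem _
        (Ideal.mul_mem_right _ _ (Ideal.subset_span (Set.mem_insert_of_mem _ rfl)))
        (Ideal.mul_mem_right _ _ (Ideal.subset_span (Set.mem_insert _ _)))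

/-- Let `n ≥ 3` be odd, `ζ` a primitive `n`-th root of unity, and let `W = D_n` act on
`ℂ[X,Y]` by `r·X = ζX`, `r·Y = ζ⁻¹Y`, `s·X = Y`, `s·Y = X`.  Every `W`-invariant
polynomial `f` (i.e. `r·f = f` and `s·f = f`) with `f(0,0) = 0` belongs to the ideal
generated by `XY` and `Xⁿ + Yⁿ`. -/
theorem stmt_11 (n : ℕ) (hn : 3 ≤ n) (hodd : Odd n) (ζ : ℂ) (hζ : IsPrimitiveRoot ζ n)
    (f : MvPolynomial (Fin 2) ℂ) (hr : rAct ζ f = f) (hs : sAct f = f)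
    (h0 : eval (0 : Fin 2 → ℂ) f = 0) :
    f ∈ Ideal.span {X 0 * X 1, (X 0 : MvPolynomial (Fin 2) ℂ) ^ n + X 1 ^ n} := by
  classical
  set I := Ideal.span {X 0 * X 1, (X 0 : MvPolynomial (Fin 2) ℂ) ^ n + X 1 ^ n} with hI
  have hXY : Ideal.span {(X 0 * X 1 : MvPolynomial (Fin 2) ℂ)} ≤ I := by
    apply Ideal.span_mono
    simp [Set.singleton_subset_iff]
  -- constant coefficient is zero
  have hc0 : coeff 0 f = 0 := by
    rwa [eval_zero, constantCoeff_eq] at h0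
  have h0S : (0 : Fin 2 →₀ ℕ) ∉ f.support := by
    rw [notMem_support_iff]; exact hc0
  -- coefficient symmetry
  have hsym : ∀ d : Fin 2 →₀ ℕ, coeff (sw d) f = coeff d f := by
    intro d; conv_lhs => rw [← hs]
    exact coeff_sAct f d
  -- divisibility for pure X monomials
  have hdvd : ∀ d ∈ f.support, d 1 = 0 → n ∣ d 0 := by
    intro d hd hd1
    have := coeff_rAct ζ f d
    rw [hr, hd1, pow_zero, mul_one] at this
    have hne : coeff d f ≠ 0 := mem_support_iff.mp hd
    have hz : ζ ^ d 0 = 1 := by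
      have h2 : (ζ ^ d 0 - 1) * coeff d f = 0 := by linear_combination -this
      rcases mul_eq_zero.mp h2 with h | h
      · linear_combination h
      · exact absurd h hne
    exact (hζ.pow_eq_one_iff_dvd _).mp hz
  -- decompose f
  rw [f.as_sum]
  rw [← Finset.sum_filter_add_sum_filter_not f.support (fun d => d 0 = 0 ∨ d 1 = 0)]
  apply Ideal.add_mem
  swap
  · -- mixed monomials
    apply Ideal.sum_mem
    intro d hd
    rw [Finset.mem_filter] at hd
    have h2 := hd.2
    push_neg at h2
    exact hXY (monomial_mem_XY d _ h2.1 h2.2)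
  · -- pure monomials
    have hsplit : f.support.filter (fun d => d 0 = 0 ∨ d 1 = 0) =
        f.support.filter (fun d => d 1 = 0) ∪ f.support.filter (fun d => d 0 = 0) := by
      ext d
      simp only [Finset.mem_filter, Finset.mem_union]
      tauto
    have hdisj : Disjoint (f.support.filter (fun d => d 1 = 0))
        (f.support.filter (fun d => d 0 = 0)) := by
      rw [Finset.disjoint_left]
      intro d h1 h2
      rw [Finset.mem_filter] at h1 h2
      have hd0 : d = 0 := fin2_eq_zero d h2.2 h1.2
      exact h0S (hd0 ▸ h1.1)
    rw [hsplit, Finset.sum_union hdisj]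
    -- rewrite the second sum via the swap bijection
    have hswapsum : ∑ d ∈ f.support.filter (fun d => d 0 = 0), monomial d (coeff d f)
        = ∑ d ∈ f.support.filter (fun d => d 1 = 0), monomial (sw d) (coeff d f) := by
      apply Finset.sum_nbij' (i := sw) (j := sw)
      · intro d hd
        rw [Finset.mem_filter] at hd ⊢
        constructor
        · rw [mem_support_iff, hsym]; exact mem_support_iff.mp hd.1
        · rw [sw_apply_1]; exact hd.2
      · intro d hd
        rw [Finset.mem_filter] at hd ⊢
        constructor
        · rw [mem_support_iff, hsym]; exact mem_support_iff.mp hd.1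
        · rw [sw_apply_0]; exact hd.2
      · intro d _; exact sw_sw d
      · intro d _; exact sw_sw d
      · intro d _
        rw [sw_sw, hsym]
    rw [hswapsum, ← Finset.sum_add_distrib]
    apply Ideal.sum_mem
    intro d hd
    rw [Finset.mem_filter] at hd
    obtain ⟨hdS, hd1⟩ := hd
    have hd0 : d 0 ≠ 0 := by
      intro h
      exact h0S (fin2_eq_zero d h hd1 ▸ hdS)
    obtain ⟨k, hk⟩ := hdvd d hdS hd1
    rw [mul_comm] at hk
    have hk1 : 1 ≤ k := by
      rcases Nat.eq_zero_or_pos k with h | h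
      · exfalso; apply hd0; rw [hk, h, zero_mul]
      · exact h
    have key : monomial d (coeff d f) + monomial (sw d) (coeff d f)
        = C (coeff d f) * ((X 0 : MvPolynomial (Fin 2) ℂ) ^ (k * n) + X 1 ^ (k * n)) := by
      rw [monomial_eq_two, monomial_eq_two, sw_apply_0, sw_apply_1, hd1, hk]
      ring
    rw [key]
    exact Ideal.mul_mem_left _ _ (powsum_mem n (by omega) k hk1)

end
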